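/- If a distribution on the grid fractionally covers all vertices and a vertex v holds k ≥ 1 pebbles, then the excess weight W(v) − 1 at v is at least (12/25)k. -/

import Mathlib

/-!
Average the covering condition `W(u) ≥ 1` over the four diagonal neighbours `u = v + (±1, ±1)`.
On the grid `d(u, w)` is the Manhattan distance, so `∑ₑ 2^{-d(v+e, w)}` factors into two
one-dimensional sums `2^{-|a+1|} + 2^{-|a-1|} ≤ (5/2) 2^{-|a|}`; hence it is at most
`(25/4) 2^{-d(v, w)}`, while for `w = v` it equals `1`. Weighting by `D w` and summing gives
`16/25 + (21/25) D(v) ≤ W(v)`, so `W(v) - 1 ≥ (21k - 9)/25 ≥ (12/25) k` once `k ≥ 1`.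
-/

/-- The infinite square grid: vertices `ℤ × ℤ`, adjacency iff Manhattan distance 1. -/
def gridGraph : SimpleGraph (ℤ × ℤ) where
  Adj p q := (p.1 - q.1).natAbs + (p.2 - q.2).natAbs = 1
  symm := ⟨fun p q h => by omega⟩
  loopless := ⟨fun p h => by simp at h⟩

def manhattan (p q : ℤ × ℤ) : ℕ := (p.1 - q.1).natAbs + (p.2 - q.2).natAbs

namespace gridGraph

theorem exists_adj_manhattan_succ_eq {p q : ℤ × ℤ} (hpq : p ≠ q) :
    ∃ p', gridGraph.Adj p p' ∧ manhattan p' q + 1 = manhattan p q := by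
  obtain ⟨a, b⟩ := p
  obtain ⟨c, d⟩ := q
  simp only [gridGraph, manhattan, ne_eq, Prod.mk.injEq] at hpq ⊢
  by_cases hac : a = c
  · refine ⟨(a, b + if b < d then 1 else -1), ?_⟩
    split_ifs <;> omega
  · refine ⟨(a + if a < c then 1 else -1, b), ?_⟩
    split_ifs <;> omega

theorem exists_walk_length_eq_manhattan (p q : ℤ × ℤ) :
    ∃ w : gridGraph.Walk p q, w.length = manhattan p q := by
  induction hn : manhattan p q generalizing p with
  | zero =>
    obtain rfl : p = q := by simp only [manhattan] at hn; ext <;> omega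
    exact ⟨.nil, rfl⟩
  | succ n ih =>
    have hpq : p ≠ q := by rintro rfl; simp [manhattan] at hn
    obtain ⟨p', hadj, hp'⟩ := exists_adj_manhattan_succ_eq hpq
    obtain ⟨w, hw⟩ := ih p' (by omega)
    exact ⟨.cons hadj w, by simp [hw]⟩

theorem manhattan_le_length {p q : ℤ × ℤ} (w : gridGraph.Walk p q) :
    manhattan p q ≤ w.length := by
  induction w with
  | nil => simp [manhattan]
  | @cons a b c hadj w ih =>
    have h : (a.1 - b.1).natAbs + (a.2 - b.2).natAbs = 1 := hadj
    simp only [manhattan, SimpleGraph.Walk.length_cons] at ih ⊢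
    omega

theorem dist_eq_manhattan (p q : ℤ × ℤ) : gridGraph.dist p q = manhattan p q := by
  obtain ⟨w, hw⟩ := exists_walk_length_eq_manhattan p q
  obtain ⟨w', hw'⟩ := SimpleGraph.Reachable.exists_walk_length_eq_dist ⟨w⟩
  exact le_antisymm (hw ▸ SimpleGraph.dist_le w) (hw' ▸ manhattan_le_length w')

end gridGraph

theorem mul_pow_natAbs_add_one_add_pow_natAbs_sub_one_le {r : ℝ} (hr0 : 0 ≤ r) (hr1 : r ≤ 1)
    (a : ℤ) : r * (r ^ (a + 1).natAbs + r ^ (a - 1).natAbs) ≤ (1 + r ^ 2) * r ^ a.natAbs := by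
  rcases lt_trichotomy a 0 with ha | rfl | ha
  · obtain ⟨n, hn⟩ : ∃ n, a.natAbs = n + 1 := ⟨a.natAbs - 1, by omega⟩
    rw [show (a + 1).natAbs = n by omega, show (a - 1).natAbs = n + 2 by omega, hn]
    exact le_of_eq (by ring)
  · norm_num
    nlinarith
  · obtain ⟨n, hn⟩ : ∃ n, a.natAbs = n + 1 := ⟨a.natAbs - 1, by omega⟩
    rw [show (a + 1).natAbs = n + 2 by omega, show (a - 1).natAbs = n by omega, hn]
    exact le_of_eq (by ring)

def diagonalSteps : Finset (ℤ × ℤ) := {1, -1} ×ˢ {1, -1}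

theorem sq_mul_sum_diagonalSteps_pow_le {r : ℝ} (hr0 : 0 ≤ r) (hr1 : r ≤ 1) (x : ℤ × ℤ) :
    r ^ 2 * ∑ e ∈ diagonalSteps, r ^ ((x.1 + e.1).natAbs + (x.2 + e.2).natAbs)
      ≤ (1 + r ^ 2) ^ 2 * r ^ (x.1.natAbs + x.2.natAbs) := by
  set S : ℤ → ℝ := fun a => r ^ (a + 1).natAbs + r ^ (a - 1).natAbs
  have hsplit : ∑ e ∈ diagonalSteps, r ^ ((x.1 + e.1).natAbs + (x.2 + e.2).natAbs)
      = S x.1 * S x.2 := by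
    simp only [S, diagonalSteps, Finset.sum_product, Finset.sum_insert, Finset.mem_singleton,
      Finset.sum_singleton, reduceCtorEq, not_false_eq_true, pow_add, sub_eq_add_neg]
    ring
  have h1 := mul_pow_natAbs_add_one_add_pow_natAbs_sub_one_le hr0 hr1 x.1
  have h2 := mul_pow_natAbs_add_one_add_pow_natAbs_sub_one_le hr0 hr1 x.2
  calc r ^ 2 * ∑ e ∈ diagonalSteps, r ^ ((x.1 + e.1).natAbs + (x.2 + e.2).natAbs)
      = (r * S x.1) * (r * S x.2) := by rw [hsplit]; ring
    _ ≤ ((1 + r ^ 2) * r ^ x.1.natAbs) * ((1 + r ^ 2) * r ^ x.2.natAbs) :=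
      mul_le_mul h1 h2 (by positivity) (by positivity)
    _ = (1 + r ^ 2) ^ 2 * r ^ (x.1.natAbs + x.2.natAbs) := by ring

theorem half_pow_dist_diagonal_le (v w : ℤ × ℤ) :
    4 / 25 * ∑ e ∈ diagonalSteps, (1 / 2 : ℝ) ^ gridGraph.dist (v + e) w
      + (if w = v then 21 / 25 else 0) ≤ (1 / 2 : ℝ) ^ gridGraph.dist v w := by
  simp only [gridGraph.dist_eq_manhattan, manhattan, Prod.fst_add, Prod.snd_add,
    add_sub_right_comm _ _ w.1, add_sub_right_comm _ _ w.2]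
  split_ifs with hwv
  · subst hwv
    norm_num [diagonalSteps, Finset.sum_product]
  · have := sq_mul_sum_diagonalSteps_pow_le (r := 1 / 2) (by norm_num) (by norm_num) (v - w)
    simp only [Prod.fst_sub, Prod.snd_sub] at this
    linarith

noncomputable def gridWeight (D : ℤ × ℤ → ℝ) (u : ℤ × ℤ) : ℝ :=
  ∑' w, D w * (1 / 2) ^ gridGraph.dist u w

theorem add_le_gridWeight {D : ℤ × ℤ → ℝ} (hD : 0 ≤ D) (hcov : ∀ u, 1 ≤ gridWeight D u)
    (v : ℤ × ℤ) : 16 / 25 + 21 / 25 * D v ≤ gridWeight D v := by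
  set F : ℤ × ℤ → ℤ × ℤ → ℝ := fun u w => D w * (1 / 2) ^ gridGraph.dist u w
  -- a non-summable series has `tsum` zero, which would violate the covering condition
  have hF : ∀ u, Summable (F u) := fun u => by
    by_contra h
    have := hcov u
    rw [gridWeight, tsum_eq_zero_of_not_summable h] at this
    norm_num at this
  have hpoint : ∀ w, 4 / 25 * ∑ e ∈ diagonalSteps, F (v + e) w
      + (if w = v then 21 / 25 * D w else 0) ≤ F v w := fun w => by
    refine le_of_eq_of_le ?_ (mul_le_mul_of_nonneg_left (half_pow_dist_diagonal_le v w) (hD w))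
    simp only [F, mul_add, Finset.mul_sum, mul_ite, mul_zero, mul_left_comm (D w)]
    ring_nf
  have hdiag : 4 ≤ ∑ e ∈ diagonalSteps, gridWeight D (v + e) :=
    calc (4 : ℝ) = ∑ _e ∈ diagonalSteps, 1 := by simp [diagonalSteps]
      _ ≤ _ := Finset.sum_le_sum fun e _ => hcov (v + e)
  have hsum : Summable fun w => ∑ e ∈ diagonalSteps, F (v + e) w :=
    summable_sum fun e _ => hF (v + e)
  have hsingle : Summable fun w => if w = v then 21 / 25 * D w else 0 :=
    (hasSum_single v fun _ h => if_neg h).summable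
  calc 16 / 25 + 21 / 25 * D v
      ≤ 4 / 25 * ∑ e ∈ diagonalSteps, gridWeight D (v + e) + 21 / 25 * D v := by linarith
    _ = ∑' w, (4 / 25 * ∑ e ∈ diagonalSteps, F (v + e) w
          + (if w = v then 21 / 25 * D w else 0)) := by
      rw [(hsum.mul_left _).tsum_add hsingle, hsum.tsum_mul_left, tsum_ite_eq,
        Summable.tsum_finsetSum fun e _ => hF (v + e)]
      rfl
    _ ≤ gridWeight D v := 
      Summable.tsum_le_tsum hpoint ((hsum.mul_left _).add hsingle) (hF v)

/-- If a distribution fractionally covers every vertex of the grid and `v` carries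
`k ≥ 1` pebbles, then the excess weight at `v` is at least `(12/25)k`. -/
theorem excess_weight_bound (D : ℤ × ℤ → ℕ)
    (hcov : ∀ u : ℤ × ℤ, 1 ≤ ∑' v : ℤ × ℤ, (D v : ℝ) * (1 / 2) ^ (gridGraph.dist u v))
    (v : ℤ × ℤ) (hv : 1 ≤ D v) :
    (12 / 25 : ℝ) * (D v : ℝ) ≤
      (∑' w : ℤ × ℤ, (D w : ℝ) * (1 / 2) ^ (gridGraph.dist v w)) - 1 := by
  have hW : 16 / 25 + 21 / 25 * (D v : ℝ) ≤ gridWeight (fun w => D w) v :=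
    add_le_gridWeight (fun w => Nat.cast_nonneg (D w)) hcov v
  have hk : (1 : ℝ) ≤ D v := by exact_mod_cast hv
  rw [gridWeight] at hW
  linarith
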